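/- arXiv:1212.6789 — 2 statements merged into one kernel-verified Lean document; each statement's English description precedes it below -/
import Mathlib

section
/- Let λ be an n-partition, let T be a semistandard tableau of shape λ, and let (j,i) be a box of λ. Let T′ be the tableau obtained by removing the first j−1 columns from the remnant tableau T^{(j;i)}. Then the scanning value S(T;j,i) equals m(T′), the maximum of the values at the bottoms of the columns of T′. -/
/-
Common combinatorial set-up for "Tableaux for Key Polynomials, Demazure
Characters, and Atoms" (Proctor–Willis).

Conventions: a box `(j, i)` means column `j`, row `i`, both 1-indexed.
Partial (remnant) tableaux are encoded by their column-length functions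
`c : ℕ → ℕ` (each column of a remnant is a top segment of the original
column), together with the ambient value function `T : ℕ → ℕ → ℕ`.
-/

open scoped BigOperators Classical

noncomputable section

namespace KeyPoly

open MvPolynomial

/-- An `n`-partition `λ = (λ_1, …, λ_n)` with `λ_1 ≥ … ≥ λ_n ≥ 0`,
recorded as a function on `1, …, n`, vanishing beyond `n`. -/
structure NPartition (n : ℕ) where
  part : ℕ → ℕ
  antitone : ∀ ⦃i j : ℕ⦄, 1 ≤ i → i ≤ j → part j ≤ part i
  outside : ∀ i : ℕ, n < i → part i = 0

variable {n : ℕ}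

/-- The column length `ζ_j` of the Young diagram of `λ`. -/
def zeta (lam : NPartition n) (j : ℕ) : ℕ :=
  ((Finset.Icc 1 n).filter fun i => j ≤ lam.part i).card

/-- The box `(j,i)` (column `j`, row `i`) belongs to the diagram of `λ`. -/
def InShape (lam : NPartition n) (j i : ℕ) : Prop :=
  1 ≤ j ∧ 1 ≤ i ∧ i ≤ n ∧ j ≤ lam.part i

/-- The boxes of the diagram of `λ`, as a finite set of pairs (column, row). -/
def boxes (lam : NPartition n) : Finset (ℕ × ℕ) :=
  (Finset.Icc 1 (lam.part 1) ×ˢ Finset.Icc 1 n).filter fun b => b.1 ≤ lam.part b.2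

/-- `T` is a semistandard tableau of shape `λ` with values in `[1,n]`:
rows weakly increase eastward, columns strictly increase southward. -/
def IsSSYT (lam : NPartition n) (T : ℕ → ℕ → ℕ) : Prop :=
  (∀ j i, InShape lam j i → 1 ≤ T j i ∧ T j i ≤ n) ∧
  (∀ j i, InShape lam (j + 1) i → T j i ≤ T (j + 1) i) ∧
  (∀ j i, InShape lam j (i + 1) → T j i < T j (i + 1))

/-- Normalization: the filling vanishes outside the shape. -/
def ZeroOutside (lam : NPartition n) (T : ℕ → ℕ → ℕ) : Prop :=
  ∀ j i, ¬ InShape lam j i → T j i = 0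

/-- `T(l, k+1)`, with the boundary convention `n+1` when `k = ζ_l`. -/
def south (lam : NPartition n) (T : ℕ → ℕ → ℕ) (l k : ℕ) : ℕ :=
  if InShape lam l (k + 1) then T l (k + 1) else n + 1

/-- `T(l+1, k)`, with the boundary convention `n` when `l = λ_k`. -/
def east (lam : NPartition n) (T : ℕ → ℕ → ℕ) (l k : ℕ) : ℕ :=
  if InShape lam (l + 1) k then T (l + 1) k else n

/-- An `n`-permutation: a tuple `(p 1, …, p n)` of distinct entries from `[1,n]`. -/
def IsNPerm (n : ℕ) (p : ℕ → ℕ) : Prop :=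
  Set.BijOn p (Set.Icc 1 n) (Set.Icc 1 n)

/-- The `λ`-key `Y_λ(π)`: column `j` is `π_1, …, π_{ζ_j}` sorted increasingly
(from top to bottom); zero outside the shape. -/
def keyTab (lam : NPartition n) (p : ℕ → ℕ) (j i : ℕ) : ℕ :=
  if InShape lam j i then
    (((Finset.Icc 1 (zeta lam j)).image p).sort (· ≤ ·)).getD (i - 1) 0
  else 0

/-- A semistandard `T` is a key if the values of each column contain the
values of every column to its east. -/
def colSet (lam : NPartition n) (T : ℕ → ℕ → ℕ) (j : ℕ) : Finset ℕ :=
  (Finset.Icc 1 (zeta lam j)).image (T j)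

def IsKey (lam : NPartition n) (T : ℕ → ℕ → ℕ) : Prop :=
  ∀ j j' : ℕ, 1 ≤ j → j ≤ j' → j' ≤ lam.part 1 → colSet lam T j' ⊆ colSet lam T j

/-! ### The (right) scanning method -/

/-- The next column of the scanning path: the earliest column `h' > h`
(up to `maxCol`) whose column bottom in the remnant `c` is nonempty and has
value weakly larger than the bottom value of column `h`. -/
def nextCol (T : ℕ → ℕ → ℕ) (c : ℕ → ℕ) (maxCol h : ℕ) : Option ℕ :=
  (List.range' (h + 1) (maxCol - h)).find?
    (fun h' => decide (0 < c h' ∧ T h (c h) ≤ T h' (c h')))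

/-- Columns of the scanning path (EWIS of column bottoms) starting at column `h`,
with explicit fuel. -/
def pathColsAux (T : ℕ → ℕ → ℕ) (c : ℕ → ℕ) (maxCol : ℕ) : ℕ → ℕ → List ℕ
  | 0, h => [h]
  | fuel + 1, h =>
    match nextCol T c maxCol h with
    | none => [h]
    | some h' => h :: pathColsAux T c maxCol fuel h'

/-- Columns of the scanning path starting at the bottom of column `j` of the
remnant with column lengths `c`. -/
def pathCols (T : ℕ → ℕ → ℕ) (c : ℕ → ℕ) (maxCol j : ℕ) : List ℕ :=
  pathColsAux T c maxCol maxCol j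

/-- Remove the scanning path starting in column `j` from the remnant `c`. -/
def removePath (T : ℕ → ℕ → ℕ) (c : ℕ → ℕ) (maxCol j : ℕ) : ℕ → ℕ :=
  fun h => if h ∈ pathCols T c maxCol j then c h - 1 else c h

/-- Iterate path removal `r` times, always starting from column `j`. -/
def remnantIter (T : ℕ → ℕ → ℕ) (c0 : ℕ → ℕ) (maxCol j : ℕ) : ℕ → ℕ → ℕ
  | 0 => c0
  | r + 1 => removePath T (remnantIter T c0 maxCol j r) maxCol j

/-- Column lengths of the remnant tableau `T^{(j;i)}`. -/
def remnant (lam : NPartition n) (T : ℕ → ℕ → ℕ) (j i : ℕ) : ℕ → ℕ :=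
  remnantIter T (zeta lam) (lam.part 1) j (zeta lam j - i)

/-- The scanning path `P(T; j, i)`, recorded by its list of columns. -/
def scanPath (lam : NPartition n) (T : ℕ → ℕ → ℕ) (j i : ℕ) : List ℕ :=
  pathCols T (remnant lam T j i) (lam.part 1) j

/-- The scanning value `S(T; j, i)`: the last value of the EWIS from `(j,i)`. -/
def scanValue (lam : NPartition n) (T : ℕ → ℕ → ℕ) (j i : ℕ) : ℕ :=
  T ((scanPath lam T j i).getLastD j)
    (remnant lam T j i ((scanPath lam T j i).getLastD j))

/-- The box `(l,k)` lies on the scanning path `P(T; j, i)`. -/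
def InScanPath (lam : NPartition n) (T : ℕ → ℕ → ℕ) (j i l k : ℕ) : Prop :=
  l ∈ scanPath lam T j i ∧ k = remnant lam T j i l

/-- `m(U)` where `U` is the remnant with column lengths `c` restricted to the
columns `l+1, …, maxCol`:  the maximum of the column-bottom values, with the
convention `m((())) = 1` for the empty tableau. -/
def mEast (T : ℕ → ℕ → ℕ) (c : ℕ → ℕ) (maxCol l : ℕ) : ℕ :=
  max 1 (((Finset.Icc (l + 1) maxCol).filter fun h => 0 < c h).sup fun h => T h (c h))

/-! ### The condition sets A, C, and B -/

/-- The set `A_λ(T, π; l, k)`. -/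
def Aset (lam : NPartition n) (T : ℕ → ℕ → ℕ) (p : ℕ → ℕ) (l k : ℕ) : Set ℕ :=
  if keyTab lam p l k < mEast T (remnant lam T l k) (lam.part 1) l then (∅ : Set ℕ)
  else Set.Icc k (min (keyTab lam p l k) (min (south lam T l k - 1) (east lam T l k)))

/-- The set `C_λ(T, π; l, k)`. -/
def Cset (lam : NPartition n) (T : ℕ → ℕ → ℕ) (p : ℕ → ℕ) (l k : ℕ) : Set ℕ :=
  if l = lam.part 1 then {keyTab lam p l k}
  else if keyTab lam p l k < mEast T (remnant lam T l k) (lam.part 1) l then (∅ : Set ℕ)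
  else if mEast T (remnant lam T l k) (lam.part 1) l = keyTab lam p l k then
    Set.Icc k (min (keyTab lam p l k) (min (south lam T l k - 1) (east lam T l k)))
  else {keyTab lam p l k} ∩ Set.Icc k (min (south lam T l k - 1) (east lam T l k))

/-- The row index `a(l,k;j)`:  the `i` with `(l-1,k) ∈ P(T;j,i)`
(convention `a(l,k;l) = k`). -/
def aIdx (lam : NPartition n) (T : ℕ → ℕ → ℕ) (l k j : ℕ) : ℕ :=
  if j = l then k
  else ((Finset.Icc 1 (zeta lam j)).filter fun i => InScanPath lam T j i (l - 1) k).sup id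

/-- The row index `b(l,k;j)`:  the `i` with `(l,k+1) ∈ P(T;j,i)` when `k < ζ_l`,
and `ζ_j + 1` when `k = ζ_l` (convention `b(l,k;l) = k+1`). -/
def bIdx (lam : NPartition n) (T : ℕ → ℕ → ℕ) (l k j : ℕ) : ℕ :=
  if j = l then k + 1
  else if k = zeta lam l then zeta lam j + 1
  else ((Finset.Icc 1 (zeta lam j)).filter fun i => InScanPath lam T j i l (k + 1)).sup id

/-- `E(l,k;j,i)`:  the value of `T` at the box `(h,m)` of `P(T;j,i)` with `h < l`
maximal (convention `E(l,k;l,k) = k`). -/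
def Epath (lam : NPartition n) (T : ℕ → ℕ → ℕ) (l k j i : ℕ) : ℕ :=
  if j = l then k
  else
    T (((scanPath lam T j i).filter fun h => decide (h < l)).foldr max 0)
      (remnant lam T j i (((scanPath lam T j i).filter fun h => decide (h < l)).foldr max 0))

/-- The set `B_λ(T, π; l, k) = ⋂_{j=1}^{l} ⋃_{i=a(j)}^{b(j)-1} [E(l,k;j,i), Y_λ(π)(j,i)]`. -/
def Bset (lam : NPartition n) (T : ℕ → ℕ → ℕ) (p : ℕ → ℕ) (l k : ℕ) : Set ℕ :=
  {v | ∀ j, 1 ≤ j → j ≤ l →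
    ∃ i, aIdx lam T l k j ≤ i ∧ i + 1 ≤ bIdx lam T l k j ∧
      Epath lam T l k j i ≤ v ∧ v ≤ keyTab lam p j i}

/-! ### The left scanning method -/

/-- The largest row `r ≤ c j` of column `j` whose value is at most `x`. -/
def maxRow (T : ℕ → ℕ → ℕ) (c : ℕ → ℕ) (j x : ℕ) : ℕ :=
  ((Finset.Icc 1 (c j)).filter fun r => T j r ≤ x).sup id

/-- The rows of the maximizing weakly decreasing sequence through columns
`j, j-1, …, 1` with initial bound `x`, in a remnant with column lengths `c`. -/
def leftRows (T : ℕ → ℕ → ℕ) (c : ℕ → ℕ) : ℕ → ℕ → List ℕ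
  | 0, _ => []
  | j + 1, x => maxRow T c (j + 1) x :: leftRows T c j (T (j + 1) (maxRow T c (j + 1) x))

/-- The column-1 value at the end of the left scanning path originating at `(j, r)`. -/
def leftEndVal (T : ℕ → ℕ → ℕ) (c : ℕ → ℕ) (j r : ℕ) : ℕ :=
  T 1 ((leftRows T c j (T j r)).getLastD 0)

/-- Remove the left scanning path originating at `(l, c l)`, together with
all values beneath it, from the remnant `c`. -/
def leftRemovePath (T : ℕ → ℕ → ℕ) (c : ℕ → ℕ) (l : ℕ) : ℕ → ℕ :=
  fun j =>
    if 1 ≤ j ∧ j ≤ l then (leftRows T c l (T l (c l))).getD (l - j) 0 - 1 else c j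

/-- Iterate left-path removal `r` times (always for column `l`). -/
def leftRemnantIter (T : ℕ → ℕ → ℕ) (c0 : ℕ → ℕ) (l : ℕ) : ℕ → ℕ → ℕ
  | 0 => c0
  | r + 1 => leftRemovePath T (leftRemnantIter T c0 l r) l

/-- Column lengths of the left remnant used to compute `M(T; l, i)`:
`T` restricted to its first `l` columns with the left scanning paths
originating at `(l, ζ_l), …, (l, i+1)` (and everything beneath them) removed. -/
def leftRemnant (lam : NPartition n) (T : ℕ → ℕ → ℕ) (l i : ℕ) : ℕ → ℕ :=
  leftRemnantIter T (zeta lam) l (zeta lam l - i)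

/-- The left scanning value `M(T; l, i)`. -/
def leftScanValue (lam : NPartition n) (T : ℕ → ℕ → ℕ) (l i : ℕ) : ℕ :=
  leftEndVal T (leftRemnant lam T l i) l i

/-! ### The condition sets F and G -/

/-- The set `F_λ(T, σ; l, k)`. -/
def Fset (lam : NPartition n) (T : ℕ → ℕ → ℕ) (sg : ℕ → ℕ) (l k : ℕ) : Set ℕ :=
  if l = 1 then Set.Icc (keyTab lam sg 1 k) (south lam T 1 k - 1)
  else
    let U := leftRemnant lam T l k
    let q := maxRow T U (l - 1) (south lam T l k - 1)
    let P := (Finset.Icc 1 q).filter fun h => keyTab lam sg l k ≤ leftEndVal T U (l - 1) h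
    if hP : P.Nonempty then Set.Icc (T (l - 1) (P.min' hP)) (south lam T l k - 1)
    else (∅ : Set ℕ)

/-- The set `G_λ(T, σ; l, k)`. -/
def Gset (lam : NPartition n) (T : ℕ → ℕ → ℕ) (sg : ℕ → ℕ) (l k : ℕ) : Set ℕ :=
  if l = 1 then {keyTab lam sg 1 k}
  else
    let U := leftRemnant lam T l k
    let q := maxRow T U (l - 1) (south lam T l k - 1)
    let P := (Finset.Icc 1 q).filter fun h => leftEndVal T U (l - 1) h = keyTab lam sg l k
    if hP : P.Nonempty then
      Set.Icc (T (l - 1) (P.min' hP))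
        (min ((if P.max' hP + 1 ≤ U (l - 1) then T (l - 1) (P.max' hP + 1) else n + 1) - 1)
          (south lam T l k - 1))
    else (∅ : Set ℕ)

/-! ### Polynomials, divided differences, words -/

/-- Polynomials in the variables `X 1, …, X n` (indexed by `ℕ`) over `ℚ`. -/
abbrev Poly : Type := MvPolynomial ℕ ℚ

/-- The action of `s_i` on polynomials: interchange `x_i` and `x_{i+1}`. -/
def sOp (i : ℕ) (P : Poly) : Poly := rename (Equiv.swap i (i + 1)) P

/-- The divided difference operator
`ρ_i = (x_i - x_{i+1})⁻¹ ∘ (1 - s_i) ∘ x_i`, defined as the unique polynomial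
`Q` with `(x_i - x_{i+1}) Q = x_i P - s_i (x_i P)`. -/
def rhoOp (i : ℕ) (P : Poly) : Poly :=
  if h : ∃ Q : Poly, (X i - X (i + 1)) * Q = X i * P - sOp i (X i * P) then h.choose
  else 0

/-- The operator `ρ̄_i := ρ_i - 1`. -/
def rhoBarOp (i : ℕ) (P : Poly) : Poly := rhoOp i P - P

/-- Apply operators indexed by a word `[i_t, …, i_1]`, rightmost first:
`applyOps f [i_t, …, i_1] P = f i_t (⋯ (f i_1 P))`. -/
def applyOps (f : ℕ → Poly → Poly) : List ℕ → Poly → Poly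
  | [], P => P
  | i :: w, P => f i (applyOps f w P)

/-- The monomial `x_1^{λ_1} ⋯ x_n^{λ_n}`. -/
def lamMonomial (lam : NPartition n) : Poly :=
  ∏ i ∈ Finset.Icc 1 n, X i ^ lam.part i

/-- The weight monomial `x^T = ∏ x_i^{c_i}` of the filling `T`. -/
def weight (lam : NPartition n) (T : ℕ → ℕ → ℕ) : Poly :=
  ∏ b ∈ boxes lam, X (T b.1 b.2)

/-- The simple reflection `s_i` acting by value. -/
def swapVal (i v : ℕ) : ℕ := if v = i then i + 1 else if v = i + 1 then i else v

/-- The permutation `s_{i_t} ⋯ s_{i_1}.(1, 2, …, n)` obtained by applying the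
word `w = [i_t, …, i_1]` (rightmost letter first, each acting by value) to the
identity. -/
def permOfWord (w : List ℕ) : ℕ → ℕ := w.foldr (fun i f => swapVal i ∘ f) id

/-- `w` is a word in letters `s_1, …, s_{n-1}` producing `π` from `(1, …, n)`. -/
def WordFor (n : ℕ) (w : List ℕ) (p : ℕ → ℕ) : Prop :=
  (∀ i ∈ w, 1 ≤ i ∧ i + 1 ≤ n) ∧ ∀ t, 1 ≤ t → t ≤ n → permOfWord w t = p t

/-- `w` is a reduced word for `π`: it produces `π` with minimal length. -/
def IsReducedWord (n : ℕ) (w : List ℕ) (p : ℕ → ℕ) : Prop :=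
  WordFor n w p ∧ ∀ w' : List ℕ, WordFor n w' p → w.length ≤ w'.length

/-- The atom `c_λ(π;x) = ρ̄_{i_t} ⋯ ρ̄_{i_1} . x_1^{λ_1} ⋯ x_n^{λ_n}`, computed
from a choice of reduced word for `π` (it is independent of this choice). -/
def atomPoly (lam : NPartition n) (p : ℕ → ℕ) : Poly :=
  if h : ∃ w : List ℕ, IsReducedWord n w p then
    applyOps rhoBarOp h.choose (lamMonomial lam)
  else 0

/-! ### `S_n^λ` -/

/-- The set `Q_λ` of distinct column lengths of `λ`. -/
def Qset (lam : NPartition n) : Finset ℕ := (Finset.Icc 1 (lam.part 1)).image (zeta lam)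

/-- `π ∈ S_n^λ`: an `n`-permutation increasing on each block `[q_{r-1}+1, q_r]`
cut out by the column lengths of `λ` (equivalently, `π_i < π_j` whenever
`i < j` and no element of `Q_λ` lies in `[i, j)`). -/
def InSnLam (lam : NPartition n) (p : ℕ → ℕ) : Prop :=
  IsNPerm n p ∧ ∀ i j, 1 ≤ i → i < j → j ≤ n →
    (∀ q ∈ Qset lam, q < i ∨ j ≤ q) → p i < p j

end KeyPoly

/-!
The scanning path from `(j, i)` is the earliest weakly increasing subsequence of the
column-bottom values of `T^{(j;i)}` from column `j` on. Every bottom value it skips is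
smaller than the current value of the path, and once it stops every later bottom value
is smaller than its last one; so its last value is the maximum of the column-bottom values
in columns `j, j+1, …`. That maximum is at least `T(j, i) ≥ 1`, so the convention
`m(∅) = 1` is not involved.
-/

namespace KeyPoly

/-- Unlike `mEast`, this is `0` when the columns `a, …, b` of `c` are all empty. -/
def colBottomSup (T : ℕ → ℕ → ℕ) (c : ℕ → ℕ) (a b : ℕ) : ℕ :=
  ((Finset.Icc a b).filter fun h => 0 < c h).sup fun h => T h (c h)

section Path

variable {T : ℕ → ℕ → ℕ} {c : ℕ → ℕ} {maxCol h h' : ℕ}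

lemma le_colBottomSup {a b : ℕ} (ha : a ≤ h) (hb : h ≤ b) (hc : 0 < c h) :
    T h (c h) ≤ colBottomSup T c a b :=
  Finset.le_sup (f := fun h => T h (c h)) (by simp [ha, hb, hc])

lemma lt_of_nextCol_eq_none (hnone : nextCol T c maxCol h = none) {x : ℕ}
    (hhx : h < x) (hx : x ≤ maxCol) (hc : 0 < c x) : T x (c x) < T h (c h) := by
  have := List.find?_eq_none.mp hnone x (List.mem_range'_1.mpr (by omega))
  simp only [decide_eq_true_eq, not_and, not_le] at this
  exact this hc

lemma nextCol_spec_of_eq_some (hsome : nextCol T c maxCol h = some h') :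
    h < h' ∧ h' ≤ maxCol ∧ 0 < c h' ∧ T h (c h) ≤ T h' (c h') ∧
      ∀ x, h < x → x < h' → 0 < c x → T x (c x) < T h (c h) := by
  obtain ⟨hp, hmem, hmin⟩ := List.find?_range'_eq_some.mp hsome
  rw [List.mem_range'_1] at hmem
  simp only [decide_eq_true_eq] at hp
  refine ⟨by omega, by omega, hp.1, hp.2, fun x hhx hxh' hc => ?_⟩
  have := hmin x hhx hxh'
  simp only [Bool.not_eq_true', decide_eq_false_iff_not, not_and, not_le] at this
  exact this hc

lemma colBottomSup_eq_of_nextCol_eq_none (hc : 0 < c h) (hh : h ≤ maxCol)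
    (hnone : nextCol T c maxCol h = none) : colBottomSup T c h maxCol = T h (c h) := by
  refine le_antisymm (Finset.sup_le fun x hx => ?_) (le_colBottomSup le_rfl hh hc)
  simp only [Finset.mem_filter, Finset.mem_Icc] at hx
  obtain ⟨⟨hhx, hx⟩, hcx⟩ := hx
  rcases hhx.eq_or_lt with rfl | hlt
  · exact le_rfl
  · exact (lt_of_nextCol_eq_none hnone hlt hx hcx).le

lemma colBottomSup_eq_of_nextCol_eq_some (hsome : nextCol T c maxCol h = some h') :
    colBottomSup T c h maxCol = colBottomSup T c h' maxCol := by
  obtain ⟨hhh', hh', hc', hstep, hskip⟩ := nextCol_spec_of_eq_some hsome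
  have hh'_le : T h' (c h') ≤ colBottomSup T c h' maxCol := le_colBottomSup le_rfl hh' hc'
  refine le_antisymm (Finset.sup_le fun x hx => ?_)
    (Finset.sup_mono (Finset.filter_subset_filter _ (Finset.Icc_subset_Icc_left hhh'.le)))
  simp only [Finset.mem_filter, Finset.mem_Icc] at hx
  obtain ⟨⟨hhx, hx⟩, hcx⟩ := hx
  by_cases hx' : h' ≤ x
  · exact le_colBottomSup hx' hx hcx
  · rcases hhx.eq_or_lt with rfl | hlt
    · exact hstep.trans hh'_le
    · exact (hskip x hlt (by omega) hcx).le.trans (hstep.trans hh'_le)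

lemma getLastD_pathColsAux_value :
    ∀ fuel h d, 0 < c h → h ≤ maxCol → maxCol - h ≤ fuel →
      T ((pathColsAux T c maxCol fuel h).getLastD d)
          (c ((pathColsAux T c maxCol fuel h).getLastD d)) = colBottomSup T c h maxCol := by
  intro fuel
  induction fuel with
  | zero =>
    intro h d hc hh hfuel
    obtain rfl : h = maxCol := by omega
    simp [pathColsAux, colBottomSup, Finset.filter_singleton, hc]
  | succ fuel ih =>
    intro h d hc hh hfuel
    unfold pathColsAux
    rcases hnext : nextCol T c maxCol h with _ | h'
    · exact (colBottomSup_eq_of_nextCol_eq_none hc hh hnext).symm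
    · obtain ⟨hhh', hh', hc', -⟩ := nextCol_spec_of_eq_some hnext
      rw [List.getLastD_cons, ih h' h hc' hh' (by omega),
        colBottomSup_eq_of_nextCol_eq_some hnext]

lemma mem_pathColsAux_self (fuel : ℕ) : h ∈ pathColsAux T c maxCol fuel h := by
  cases fuel with
  | zero => simp [pathColsAux]
  | succ fuel =>
    unfold pathColsAux
    cases nextCol T c maxCol h <;> simp

lemma remnantIter_apply_self (c0 : ℕ → ℕ) (j r : ℕ) :
    remnantIter T c0 maxCol j r j = c0 j - r := by
  induction r with
  | zero => rfl
  | succ r ih =>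
    have hmem : j ∈ pathCols T (remnantIter T c0 maxCol j r) maxCol j := mem_pathColsAux_self _
    simp only [remnantIter, removePath, if_pos hmem, ih]
    omega

end Path

variable {n : ℕ} {lam : NPartition n} {j i : ℕ}

lemma InShape.le_zeta (hbox : InShape lam j i) : i ≤ zeta lam j := by
  obtain ⟨-, hi, hin, hji⟩ := hbox
  have hsub : Finset.Icc 1 i ⊆ (Finset.Icc 1 n).filter fun i' => j ≤ lam.part i' := by
    intro x hx
    rw [Finset.mem_Icc] at hx
    simp only [Finset.mem_filter, Finset.mem_Icc]
    exact ⟨⟨hx.1, hx.2.trans hin⟩, hji.trans (lam.antitone hx.1 hx.2)⟩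
  simpa [zeta] using Finset.card_le_card hsub

lemma InShape.le_part_one (hbox : InShape lam j i) : j ≤ lam.part 1 :=
  hbox.2.2.2.trans (lam.antitone le_rfl hbox.2.1)

lemma remnant_apply_self (T : ℕ → ℕ → ℕ) (hbox : InShape lam j i) :
    remnant lam T j i j = i := by
  rw [remnant, remnantIter_apply_self]
  have := hbox.le_zeta
  omega

theorem scanValue_eq_mEast_general (n : ℕ) (lam : NPartition n)
    (T : ℕ → ℕ → ℕ) (hT : IsSSYT lam T) (j i : ℕ) (hbox : InShape lam j i) :
    scanValue lam T j i = mEast T (remnant lam T j i) (lam.part 1) (j - 1) := by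
  have hcj : remnant lam T j i j = i := remnant_apply_self T hbox
  have hcpos : 0 < remnant lam T j i j := by rw [hcj]; exact hbox.2.1
  have hscan : scanValue lam T j i = colBottomSup T (remnant lam T j i) j (lam.part 1) :=
    getLastD_pathColsAux_value _ _ _ hcpos hbox.le_part_one (Nat.sub_le _ _)
  have hpos : 1 ≤ colBottomSup T (remnant lam T j i) j (lam.part 1) :=
    calc 1 ≤ T j i := (hT.1 j i hbox).1
      _ = T j (remnant lam T j i j) := by rw [hcj]
      _ ≤ _ := le_colBottomSup le_rfl hbox.le_part_one hcpos
  rw [hscan, mEast, Nat.sub_add_cancel hbox.1]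
  exact (max_eq_right hpos).symm

/-- Lemma 4.1.  `S(T; j, i) = m(T')`, where `T'` is obtained
from the remnant `T^{(j;i)}` by removing its first `j - 1` columns. -/
theorem scanValue_eq_mEast (n : ℕ) (hn : 1 ≤ n) (lam : NPartition n)
    (T : ℕ → ℕ → ℕ) (hT : IsSSYT lam T) (j i : ℕ) (hbox : InShape lam j i) :
    scanValue lam T j i = mEast T (remnant lam T j i) (lam.part 1) (j - 1) :=
  scanValue_eq_mEast_general n lam T hT j i hbox

end KeyPoly
end
end

section
/- Let λ be an n-partition, π an n-permutation, and T a semistandard tableau of shape λ. Then S(T) ≤ Y_λ(π) (entrywise) if and only if T(l,k) ∈ A_λ(T,π;l,k) for every box (l,k) of λ. -/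
/-
Common combinatorial set-up for "Tableaux for Key Polynomials, Demazure
Characters, and Atoms" (Proctor–Willis).

Conventions: a box `(j, i)` means column `j`, row `i`, both 1-indexed.
Partial (remnant) tableaux are encoded by their column-length functions
`c : ℕ → ℕ` (each column of a remnant is a top segment of the original
column), together with the ambient value function `T : ℕ → ℕ → ℕ`.
-/

open scoped BigOperators Classical

noncomputable section

/-!
The scanning path from `(l, k)` is the earliest weakly increasing subsequence of the column
bottoms of the remnant `T^{(l;k)}` starting at `T(l,k)`, so it ends at the largest of these
bottoms: `S(T;l,k) = max (T(l,k), m(U))`, where `U` is the part of the remnant east of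
column `l`. Hence `S(T;l,k) ≤ Y_λ(π)(l,k)` says exactly that `m(U) ≤ Y_λ(π)(l,k)` and
`T(l,k) ≤ Y_λ(π)(l,k)`; the remaining bounds defining `A_λ(T,π;l,k)` hold automatically
for a semistandard `T`.
-/

namespace KeyPoly

variable {n : ℕ}

section ScanningPath

variable {T : ℕ → ℕ → ℕ} {c : ℕ → ℕ} {maxCol : ℕ}

theorem nextCol_eq_some {h g : ℕ} (hg : nextCol T c maxCol h = some g) :
    h < g ∧ g ≤ maxCol ∧ 0 < c g ∧ T h (c h) ≤ T g (c g) ∧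
      ∀ x, h < x → x < g → 0 < c x → T x (c x) < T h (c h) := by
  rw [nextCol, List.find?_range'_eq_some, List.mem_range'_1] at hg
  obtain ⟨hg, hmem, hskip⟩ := hg
  simp only [decide_eq_true_eq] at hg
  refine ⟨by omega, by omega, hg.1, hg.2, fun x hhx hxg hcx => ?_⟩
  simpa [hcx] using hskip x (by omega) hxg

theorem nextCol_eq_none {h : ℕ} (hg : nextCol T c maxCol h = none) :
    ∀ x, h < x → x ≤ maxCol → 0 < c x → T x (c x) < T h (c h) := by
  rw [nextCol, List.find?_range'_eq_none] at hg
  intro x hhx hx hcx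
  simpa [hcx] using hg x (by omega) (by omega)

theorem self_mem_pathColsAux (fuel h : ℕ) : h ∈ pathColsAux T c maxCol fuel h := by
  cases fuel with
  | zero => simp [pathColsAux]
  | succ fuel => rcases hnext : nextCol T c maxCol h with _ | g <;> simp [pathColsAux, hnext]

theorem getLastD_pathColsAux_spec (fuel h d : ℕ) :
    let e := (pathColsAux T c maxCol fuel h).getLastD d
    T h (c h) ≤ T e (c e) ∧ (e = h ∨ h < e ∧ e ≤ maxCol ∧ 0 < c e) := by
  induction fuel generalizing h d with
  | zero => simp [pathColsAux]
  | succ fuel ih =>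
    rcases hnext : nextCol T c maxCol h with _ | g
    · simp [pathColsAux, hnext]
    · obtain ⟨hhg, hg, hcg, hTg, -⟩ := nextCol_eq_some hnext
      simp only [pathColsAux, hnext, List.getLastD_cons]
      obtain ⟨hle, he | ⟨hge, he, hce⟩⟩ := ih g h
      · exact ⟨hle.trans' hTg, Or.inr (by rw [he]; exact ⟨hhg, hg, hcg⟩)⟩
      · exact ⟨hle.trans' hTg, Or.inr ⟨hhg.trans hge, he, hce⟩⟩

theorem le_getLastD_pathColsAux (fuel h d : ℕ) (hfuel : maxCol ≤ h + fuel) :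
    let e := (pathColsAux T c maxCol fuel h).getLastD d
    ∀ x, h < x → x ≤ maxCol → 0 < c x → T x (c x) ≤ T e (c e) := by
  induction fuel generalizing h d with
  | zero => intro e x hhx hx; omega
  | succ fuel ih =>
    intro e x hhx hx hcx
    rcases hnext : nextCol T c maxCol h with _ | g
    · simpa [e, pathColsAux, hnext] using (nextCol_eq_none hnext x hhx hx hcx).le
    · obtain ⟨hhg, -, -, hTg, hskip⟩ := nextCol_eq_some hnext
      simp only [e, pathColsAux, hnext, List.getLastD_cons]
      have hmono := (getLastD_pathColsAux_spec (T := T) (c := c) (maxCol := maxCol) fuel g h).1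
      rcases lt_trichotomy x g with hxg | rfl | hgx
      · exact (hskip x hhx hxg hcx).le.trans (hTg.trans hmono)
      · exact hmono
      · exact ih g h (by omega) x hgx hx hcx

theorem getLastD_pathColsAux_eq_max (h d : ℕ) :
    T ((pathColsAux T c maxCol maxCol h).getLastD d)
        (c ((pathColsAux T c maxCol maxCol h).getLastD d)) =
      max (T h (c h))
        (((Finset.Icc (h + 1) maxCol).filter fun x => 0 < c x).sup fun x => T x (c x)) := by
  obtain ⟨hmono, he⟩ := getLastD_pathColsAux_spec (T := T) (c := c) (maxCol := maxCol) maxCol h d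
  refine le_antisymm ?_ (max_le hmono (Finset.sup_le fun x hx => ?_))
  · rcases he with he | ⟨hhe, he, hce⟩
    · exact (congrArg (fun x => T x (c x)) he).le.trans (le_max_left _ _)
    · refine le_max_of_le_right (Finset.le_sup (f := fun x => T x (c x)) ?_)
      simp only [Finset.mem_filter, Finset.mem_Icc]
      exact ⟨⟨hhe, he⟩, hce⟩
  · simp only [Finset.mem_filter, Finset.mem_Icc] at hx
    exact le_getLastD_pathColsAux maxCol h d (by omega) x hx.1.1 hx.1.2 hx.2

end ScanningPath

theorem remnantIter_self (T : ℕ → ℕ → ℕ) (c0 : ℕ → ℕ) (maxCol j r : ℕ) :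
    remnantIter T c0 maxCol j r j = c0 j - r := by
  induction r with
  | zero => rfl
  | succ r ih =>
    simp only [remnantIter, removePath, pathCols, self_mem_pathColsAux, if_true, ih]
    omega

section Shape

variable {lam : NPartition n} {l k : ℕ}

theorem InShape.of_row_le (hs : InShape lam l k) {k' : ℕ} (hk' : 1 ≤ k') (hk : k' ≤ k) :
    InShape lam l k' :=
  ⟨hs.1, hk', hk.trans hs.2.2.1, hs.2.2.2.trans (lam.antitone hk' hk)⟩

theorem InShape.le_zeta_s2 (hs : InShape lam l k) : k ≤ zeta lam l := by
  have hsub : Finset.Icc 1 k ⊆ (Finset.Icc 1 n).filter fun i => l ≤ lam.part i := by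
    intro i hi
    rw [Finset.mem_Icc] at hi
    have := hs.of_row_le hi.1 hi.2
    simp only [Finset.mem_filter, Finset.mem_Icc]
    exact ⟨⟨hi.1, this.2.2.1⟩, this.2.2.2⟩
  simpa [zeta] using Finset.card_le_card hsub

theorem remnant_self (T : ℕ → ℕ → ℕ) (hs : InShape lam l k) : remnant lam T l k l = k := by
  rw [remnant, remnantIter_self]
  have := hs.le_zeta_s2
  omega

end Shape

namespace IsSSYT

variable {lam : NPartition n} {T : ℕ → ℕ → ℕ} {l k : ℕ}

theorem row_le (hT : IsSSYT lam T) (hs : InShape lam l k) : k ≤ T l k := by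
  induction k with
  | zero => omega
  | succ k ih =>
    rcases Nat.eq_zero_or_pos k with rfl | hk
    · exact (hT.1 l 1 hs).1
    · have := ih (hs.of_row_le hk k.le_succ)
      have := hT.2.2 l k hs
      omega

theorem le_south_sub_one (hT : IsSSYT lam T) (hs : InShape lam l k) :
    T l k ≤ south lam T l k - 1 := by
  unfold south
  split_ifs with hsouth
  · have := hT.2.2 l k hsouth
    omega
  · have := (hT.1 l k hs).2
    omega

theorem le_east (hT : IsSSYT lam T) (hs : InShape lam l k) : T l k ≤ east lam T l k := by
  unfold east
  split_ifs with heast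
  · exact hT.2.1 l k heast
  · exact (hT.1 l k hs).2

theorem scanValue_eq_max_mEast (hT : IsSSYT lam T) (hs : InShape lam l k) :
    scanValue lam T l k = max (T l k) (mEast T (remnant lam T l k) (lam.part 1) l) := by
  rw [scanValue, scanPath, pathCols,
    getLastD_pathColsAux_eq_max (T := T) (c := remnant lam T l k) l l, remnant_self T hs, mEast]
  have := (hT.1 l k hs).1
  omega

theorem scanValue_le_keyTab_iff (hT : IsSSYT lam T) (p : ℕ → ℕ) (hs : InShape lam l k) :
    scanValue lam T l k ≤ keyTab lam p l k ↔ T l k ∈ Aset lam T p l k := by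
  have := hT.row_le hs
  have := hT.le_south_sub_one hs
  have := hT.le_east hs
  rw [hT.scanValue_eq_max_mEast hs, Aset]
  split_ifs
  · simp only [Set.mem_empty_iff_false, iff_false]
    omega
  · simp only [Set.mem_Icc]
    omega

end IsSSYT

theorem scan_le_key_iff_Aset_general (n : ℕ) (lam : NPartition n)
    (p : ℕ → ℕ) (T : ℕ → ℕ → ℕ) (hT : IsSSYT lam T) :
    (∀ j i, InShape lam j i → scanValue lam T j i ≤ keyTab lam p j i) ↔
      (∀ l k, InShape lam l k → T l k ∈ Aset lam T p l k) :=
  forall₂_congr fun _ _ => forall_congr' fun hs => hT.scanValue_le_keyTab_iff p hs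

/-- Theorem 5.1.  `S(T) ≤ Y_λ(π)` iff every entry of `T`
lies in the corresponding set `A_λ(T, π; l, k)`. -/
theorem scan_le_key_iff_Aset (n : ℕ) (hn : 1 ≤ n) (lam : NPartition n)
    (p : ℕ → ℕ) (hp : IsNPerm n p) (T : ℕ → ℕ → ℕ) (hT : IsSSYT lam T) :
    (∀ j i, InShape lam j i → scanValue lam T j i ≤ keyTab lam p j i) ↔
      (∀ l k, InShape lam l k → T l k ∈ Aset lam T p l k) :=
  scan_le_key_iff_Aset_general n lam p T hT

end KeyPoly
end
end
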